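/- arXiv:2501.08602 — 2 statements merged into one kernel-verified Lean document; each statement's English description precedes it below -/
import Mathlib

section
/- Let a, b be positive integers with gcd(a, b) = 1, let i, s ≥ 0 be integers, let c be a positive integer with c ≡ 0 (mod a) or c ≡ 0 (mod b), and let j be an integer. Then d(g(a, b; s) + j·c; a, b) = i if and only if g(a, b; i−1) < g(a, b; s) + j·c ≤ g(a, b; i), where g(a, b; −1) is interpreted as −∞ (so for i = 0 the condition is just g(a, b; s) + j·c ≤ g(a, b; 0)). -/
open Finset

/-- Number of representations of `m` as `∑ i, a i * x i` with nonnegative integers `x i`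
(for positive weights `a i`, every solution satisfies `x i ≤ m`). -/
def repCount {k : ℕ} (a : Fin k → ℕ) (m : ℕ) : ℕ :=
  (Finset.univ.filter (fun x : Fin k → Fin (m + 1) => ∑ i, a i * (x i : ℕ) = m)).card

/-- Representation count extended to the integers (no representations of negative numbers). -/
def repCountZ {k : ℕ} (a : Fin k → ℕ) (m : ℤ) : ℕ :=
  if 0 ≤ m then repCount a m.toNat else 0

/-- The generalized Frobenius number `g(a; s)`: the largest integer having at most `s`
representations by the tuple `a`. -/
noncomputable def genFrob {k : ℕ} (a : Fin k → ℕ) (s : ℕ) : ℤ :=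
  sSup {m : ℤ | repCountZ a m ≤ s}

/-- The `n`-th triangular number `t n = n(n+1)/2`. -/
def t (n : ℕ) : ℕ := n * (n + 1) / 2

/-- `N_s^even = 6⌊√(s+1)⌋ - 6`. -/
def NEven (s : ℕ) : ℤ := 6 * (Nat.sqrt (s + 1) : ℤ) - 6

/-- `N_s^odd = 6⌊(√(4s+5) - 1)/2⌋ - 3`. -/
def NOdd (s : ℕ) : ℤ := 6 * (((Nat.sqrt (4 * s + 5) - 1) / 2 : ℕ) : ℤ) - 3

/-- `δ_s = 1` if `s ≥ ⌊√s⌋² + ⌊√s⌋`, and `0` otherwise. -/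
def deltaS (s : ℕ) : ℤ := if Nat.sqrt s ^ 2 + Nat.sqrt s ≤ s then 1 else 0

/-- `q_s = 2⌊√s⌋ + 2 + δ_s`. -/
def qS (s : ℕ) : ℤ := 2 * (Nat.sqrt s : ℤ) + 2 + deltaS s

/-- `c_s = s - ⌊√s⌋² - δ_s⌊√s⌋`. -/
def cS (s : ℕ) : ℤ := (s : ℤ) - (Nat.sqrt s : ℤ) ^ 2 - deltaS s * (Nat.sqrt s : ℤ)

/-- For `s = k(k+1) + i` with `0 ≤ i ≤ 2k+1`: `x_s^even`. -/
def xEvenN (k i : ℕ) : ℕ := if i ≤ k then i else i - k - 1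

/-- For `s = k(k+1) + i` with `0 ≤ i ≤ 2k+1`: `y_s^even`. -/
def yEvenN (k i : ℕ) : ℕ := if i ≤ k then 2 * (k - i) else 4 * k + 3 - 2 * i

/-- For `s = k(k+1) + i` with `0 ≤ i ≤ 2k+1`: `x_s^odd`. -/
def xOddN (k i : ℕ) : ℕ := if i ≤ k then 2 * i else 2 * (i - k) - 1

/-- For `s = k(k+1) + i` with `0 ≤ i ≤ 2k+1`: `y_s^odd`. -/
def yOddN (k i : ℕ) : ℕ := if i ≤ k then k - i else 2 * k + 1 - i

/-! When `a ∣ n + b`, the solutions of `a x + b y = n` are exactly the pairs with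
`y = a t + (a - 1)`, `t ≥ 0` and `a b (t + 1) ≤ n + b`, so `d(n; a, b) = ⌊(n + b) / (a b)⌋`.
Comparing with an arbitrary residue class gives `g(a, b; s) = (s + 1) a b - a - b`. If `a ∣ c`
then `g(a, b; s) + j c ≡ -b (mod a)` (symmetrically if `b ∣ c`), and on that residue class the
floor formula takes the value `i` exactly on `(g(a, b; i - 1), g(a, b; i)]`. -/

section

variable {a b : ℕ}

def pairSet (a b n : ℕ) : Finset (ℕ × ℕ) :=
  (range (n + 1) ×ˢ range (n + 1)).filter fun p => a * p.1 + b * p.2 = n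

lemma repCount_eq_card_pairSet (a b n : ℕ) : repCount ![a, b] n = #(pairSet a b n) := by
  refine Finset.card_nbij' (fun x => ((x 0 : ℕ), (x 1 : ℕ)))
    (fun p => ![Fin.ofNat _ p.1, Fin.ofNat _ p.2]) ?_ ?_ ?_ ?_
  · intro x hx
    simp_all [pairSet, Fin.sum_univ_two, Nat.le_of_lt_succ (x 0).isLt, Nat.le_of_lt_succ (x 1).isLt]
  · intro p hp
    simp_all [pairSet, Fin.sum_univ_two, Nat.mod_eq_of_lt]
  · intro x _
    ext i; fin_cases i <;> simp
  · intro p hp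
    simp_all [pairSet, Nat.mod_eq_of_lt]

lemma card_pairSet_comm (a b n : ℕ) : #(pairSet a b n) = #(pairSet b a n) :=
  Finset.card_nbij' Prod.swap Prod.swap
    (fun p hp => by simp_all [pairSet, add_comm]) (fun p hp => by simp_all [pairSet, add_comm])
    (fun p _ => p.swap_swap) (fun p _ => p.swap_swap)

lemma repCountZ_comm (a b : ℕ) (n : ℤ) : repCountZ ![a, b] n = repCountZ ![b, a] n := by
  simp only [repCountZ, repCount_eq_card_pairSet, card_pairSet_comm a b]

lemma genFrob_comm (a b s : ℕ) : genFrob ![a, b] s = genFrob ![b, a] s := by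
  simp only [genFrob, repCountZ_comm a b]

lemma snd_mod_eq_of_mem_pairSet (hab : Nat.Coprime a b) {r m : ℕ} {p : ℕ × ℕ}
    (hr : r < a) (hm : b * r ≡ m [MOD a]) (hp : p ∈ pairSet a b m) : p.2 % a = r := by
  have hp_eq : a * p.1 + b * p.2 = m := (mem_filter.mp hp).2
  have hbp : b * p.2 ≡ b * r [MOD a] := by
    calc b * p.2 ≡ a * p.1 + b * p.2 [MOD a] := by simp [Nat.ModEq]
      _ = m := hp_eq
      _ ≡ b * r [MOD a] := hm.symm
  rw [Nat.ModEq.cancel_left_of_coprime hab hbp, Nat.mod_eq_of_lt hr]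

-- The solutions have `y = r + a * t`, and `t < K` says exactly that the matching `x` is `≥ 0`.
lemma card_pairSet_eq (ha : 0 < a) (hb : 0 < b) (hab : Nat.Coprime a b) {r m K : ℕ}
    (hr : r < a) (hm : b * r ≡ m [MOD a]) (hK : ∀ t, t < K ↔ b * (r + a * t) ≤ m) :
    #(pairSet a b m) = K := by
  rw [← card_range K]
  symm
  refine Finset.card_nbij' (fun t => ((m - b * (r + a * t)) / a, r + a * t)) (fun p => p.2 / a)
    ?_ ?_ ?_ ?_
  · intro t ht
    have hle := (hK t).1 (mem_range.mp ht)
    have hmod : b * (r + a * t) ≡ m [MOD a] := by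
      calc b * (r + a * t) = b * r + a * (b * t) := by ring
        _ ≡ b * r [MOD a] := by simp [Nat.ModEq]
        _ ≡ m [MOD a] := hm
    obtain ⟨x, hx⟩ := (Nat.modEq_iff_dvd' hle).mp hmod
    simp only [coe_filter, pairSet, Set.mem_ofPred_eq, mem_product, mem_range, hx,
      Nat.mul_div_cancel_left _ ha]
    have hx_le : x ≤ a * x := Nat.le_mul_of_pos_left x ha
    have hy_le : r + a * t ≤ b * (r + a * t) := Nat.le_mul_of_pos_left _ hb
    omega
  · intro p hp
    have hmod := snd_mod_eq_of_mem_pairSet hab hr hm hp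
    have hp_eq : a * p.1 + b * p.2 = m := (mem_filter.mp hp).2
    refine mem_range.mpr ((hK _).2 ?_)
    rw [← hmod, Nat.mod_add_div]
    omega
  · intro t _
    simp [Nat.add_mul_div_left r t ha, Nat.div_eq_of_lt hr]
  · intro p hp
    have hmod := snd_mod_eq_of_mem_pairSet hab hr hm hp
    have hp_eq : a * p.1 + b * p.2 = m := (mem_filter.mp hp).2
    simp only [← hmod, Nat.mod_add_div]
    ext
    · simp [← hp_eq, Nat.mul_div_cancel_left _ ha]
    · rfl

lemma repCountZ_eq (ha : 0 < a) (hb : 0 < b) (hab : Nat.Coprime a b) {r : ℕ} {n : ℤ}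
    (hr : r < a) (hn : (a : ℤ) ∣ n - b * r) :
    repCountZ ![a, b] n = ((n - b * r) / (a * b) + 1).toNat := by
  have hab_pos : (0 : ℤ) < a * b := by positivity
  unfold repCountZ
  split_ifs with hn0
  · rw [repCount_eq_card_pairSet]
    apply card_pairSet_eq ha hb hab hr
    · rw [Nat.modEq_iff_dvd, Int.toNat_of_nonneg hn0]
      exact_mod_cast hn
    · intro t
      rw [Int.lt_toNat, Int.lt_add_one_iff, Int.le_ediv_iff_mul_le hab_pos, ← Nat.cast_le (α := ℤ)]
      push_cast
      rw [Int.toNat_of_nonneg hn0]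
      constructor <;> intro h <;> linarith
  · have : (n - b * r) / (a * b) < 0 :=
      Int.ediv_neg_of_neg_of_pos (by linarith [show (0 : ℤ) ≤ b * r by positivity]) hab_pos
    omega

lemma exists_dvd_sub_mul (ha : 0 < a) (hab : Nat.Coprime a b) (n : ℤ) :
    ∃ r < a, (a : ℤ) ∣ n - b * r := by
  have : NeZero a := ⟨ha.ne'⟩
  refine ⟨((b : ZMod a)⁻¹ * n).val, ZMod.val_lt _, ?_⟩
  rw [← ZMod.intCast_zmod_eq_zero_iff_dvd]
  push_cast
  rw [ZMod.natCast_val, ZMod.cast_id', id, ← mul_assoc, ZMod.coe_mul_inv_eq_one b hab.symm,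
    one_mul, sub_self]

lemma repCountZ_eq_of_dvd_add (ha : 0 < a) (hb : 0 < b) (hab : Nat.Coprime a b) {n : ℤ}
    (hn : (a : ℤ) ∣ n + b) : repCountZ ![a, b] n = ((n + b) / (a * b)).toNat := by
  have hsub : n - b * ((a - 1 : ℕ) : ℤ) = n + b + (-1) * (a * b) := by
    push_cast [Nat.cast_sub ha]
    ring
  rw [repCountZ_eq ha hb hab (Nat.sub_lt ha one_pos) (hsub ▸ dvd_add hn ⟨-b, by ring⟩), hsub,
    Int.add_mul_ediv_right _ _ (by positivity), neg_add_cancel_right]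

lemma nonneg_of_dvd_of_neg_lt {a x : ℤ} (hd : a ∣ x) (hx : -a < x) : 0 ≤ x := by
  by_contra! h
  linarith [Int.le_of_dvd (neg_pos.2 h) (dvd_neg.2 hd)]

theorem genFrob_pair (ha : 0 < a) (hb : 0 < b) (hab : Nat.Coprime a b) (s : ℕ) :
    genFrob ![a, b] s = ((s : ℤ) + 1) * (a * b) - a - b := by
  have hab_pos : (0 : ℤ) < a * b := by positivity
  have ha1 : (1 : ℤ) ≤ a := by exact_mod_cast ha
  apply IsGreatest.csSup_eq
  constructor
  · show repCountZ _ _ ≤ s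
    rw [repCountZ_eq_of_dvd_add ha hb hab ⟨(s + 1) * b - 1, by ring⟩]
    have hquot : (((s : ℤ) + 1) * (a * b) - a - b + b) / (a * b) = s := by
      rw [show ((s : ℤ) + 1) * (a * b) - a - b + b = (a * b - a) + s * (a * b) by ring,
        Int.add_mul_ediv_right _ _ hab_pos.ne', Int.ediv_eq_zero_of_lt (by nlinarith) (by linarith),
        zero_add]
    rw [hquot, Int.toNat_natCast]
  · intro m (hm : repCountZ ![a, b] m ≤ s)
    by_contra! hlt
    obtain ⟨r, hr, hd⟩ := exists_dvd_sub_mul ha hab m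
    have hbr : (b : ℤ) * r ≤ b * (a - 1) := by
      have : (r : ℤ) ≤ a - 1 := by omega
      nlinarith
    have hmul : s * (a * b) ≤ m - b * r := by
      have := nonneg_of_dvd_of_neg_lt (dvd_sub hd ⟨s * b, by ring⟩ : (a : ℤ) ∣ m - b * r - s * (a * b))
        (by nlinarith)
      linarith
    rw [repCountZ_eq ha hb hab hr hd] at hm
    have := (Int.le_ediv_iff_mul_le hab_pos).2 hmul
    omega

theorem repCountZ_eq_iff (ha : 0 < a) (hb : 0 < b) (hab : Nat.Coprime a b) {n : ℤ}
    (hn : (a : ℤ) ∣ n + b) (i : ℕ) :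
    repCountZ ![a, b] n = i ↔
      n ≤ genFrob ![a, b] i ∧ ∀ i' : ℕ, i = i' + 1 → genFrob ![a, b] i' < n := by
  have hab_pos : (0 : ℤ) < a * b := by positivity
  have hmul_dvd (k : ℤ) : (a : ℤ) ∣ k * (a * b) := ⟨k * b, by ring⟩
  set q := (n + b) / (a * b)
  have upper : n ≤ genFrob ![a, b] i ↔ q < i + 1 := by
    rw [genFrob_pair ha hb hab, Int.ediv_lt_iff_lt_mul hab_pos]
    refine ⟨fun h => by linarith [show (1 : ℤ) ≤ a by exact_mod_cast ha], fun h => ?_⟩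
    have := nonneg_of_dvd_of_neg_lt (dvd_sub (dvd_sub (hmul_dvd (i + 1)) hn) dvd_rfl)
      (by linarith)
    linarith
  have lower (k : ℕ) : genFrob ![a, b] k < n ↔ k + 1 ≤ q := by
    rw [genFrob_pair ha hb hab, Int.le_ediv_iff_mul_le hab_pos]
    refine ⟨fun h => ?_, fun h => by linarith [show (1 : ℤ) ≤ a by exact_mod_cast ha]⟩
    have := nonneg_of_dvd_of_neg_lt (dvd_sub hn (hmul_dvd (k + 1))) (by linarith)
    linarith
  rw [repCountZ_eq_of_dvd_add ha hb hab hn, upper]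
  simp only [lower]
  constructor
  · intro hi
    exact ⟨by omega, fun i' hi' => by omega⟩
  · rintro ⟨hq_lt, hq_ge⟩
    cases i with
    | zero => omega
    | succ i' => have := hq_ge i' rfl; omega

end

theorem stmt_14_general (a b : ℕ) (ha : 0 < a) (hb : 0 < b) (hab : Nat.gcd a b = 1)
    (i s : ℕ) (c : ℕ) (hdvd : a ∣ c ∨ b ∣ c) (j : ℤ) :
    repCountZ ![a, b] (genFrob ![a, b] s + j * c) = i ↔
      (genFrob ![a, b] s + j * c ≤ genFrob ![a, b] i ∧
        ∀ i' : ℕ, i = i' + 1 → genFrob ![a, b] i' < genFrob ![a, b] s + j * c) := by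
  rcases hdvd with ⟨k, rfl⟩ | ⟨k, rfl⟩
  · refine repCountZ_eq_iff ha hb hab ⟨(s + 1) * b - 1 + j * k, ?_⟩ i
    rw [genFrob_pair ha hb hab]
    push_cast
    ring
  · simp only [repCountZ_comm a b, genFrob_comm a b]
    refine repCountZ_eq_iff hb ha (Nat.Coprime.symm hab) ⟨(s + 1) * a - 1 + j * k, ?_⟩ i
    rw [genFrob_pair hb ha (Nat.Coprime.symm hab)]
    push_cast
    ring

/-- for coprime positive `a, b`, `c > 0` divisible by `a` or by `b`, and `j ∈ ℤ`,
`d(g(a,b;s) + jc; a, b) = i` iff `g(a,b;i-1) < g(a,b;s) + jc ≤ g(a,b;i)`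
(where `g(a,b;-1) = -∞`, so for `i = 0` only the upper inequality is required). -/
theorem stmt_14 (a b : ℕ) (ha : 0 < a) (hb : 0 < b) (hab : Nat.gcd a b = 1)
    (i s : ℕ) (c : ℕ) (hc : 0 < c) (hdvd : a ∣ c ∨ b ∣ c) (j : ℤ) :
    repCountZ ![a, b] (genFrob ![a, b] s + j * c) = i ↔
      (genFrob ![a, b] s + j * c ≤ genFrob ![a, b] i ∧
        ∀ i' : ℕ, i = i' + 1 → genFrob ![a, b] i' < genFrob ![a, b] s + j * c) :=
  stmt_14_general a b ha hb hab i s c hdvd j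
end

section
/- Let s ≥ 2 be an integer and set K_s^ev = ⌊√(s+1)⌋ − 1. Let A_1, A_2, A_3 be integers greater than 1 with gcd(A_1, A_2, A_3) = 1 and A_2 dividing A_1. If 2 < A_2·A_3/A_1 < 2 + 1/K_s^ev, then g(A_1, A_2, A_3; s) = g(A_2, A_3; x_s^even) + y_s^even·A_1. -/
open Finset

/-! Write `A₁ = A₂ q` and `A₃ = 2q + r`; the bounds on `A₂A₃/A₁` say `0 < r` and `K r < q`
for `K = K_s^ev`. As `gcd(A₂, A₃) = 1`, the `z` with `A₂ ∣ n - A₃ z` form one residue class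
`z₀ + A₂ j`, so `d(n; A₂q, A₂, A₃) = d(M; A₃, q, 1)` with `n = A₂ M + A₃ z₀`, and
`g(A₂q, A₂, A₃; s) = A₂ g(A₃, q, 1; s) + A₃(A₂ - 1)`. With `g(A₂, A₃; x) = (x+1)A₂A₃ - A₂ - A₃`
the claim becomes `g(A₃, q, 1; s) = x A₃ + y q - 1`. Count the pairs `(j, y')` with
`A₃ j + q y' ≤ M` row by row: since `r j < q` on the relevant rows,
`A₃ j + q y' = q (2j + y') + r j` is ordered lexicographically by `(2j + y', j)`, so for
`M = x A₃ + y q - 1` row `j` has `2x + y - 2j + [j < x]` points. These add up to `s`, and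
`M + 1` has exactly one point more. -/

section Counting

variable {k : ℕ}

def solutions (a : Fin k → ℕ) (m : ℕ) : Finset (Fin k → ℕ) :=
  (Fintype.piFinset fun _ => range (m + 1)).filter fun x => ∑ i, a i * x i = m

theorem mem_solutions {a : Fin k → ℕ} (ha : ∀ i, 0 < a i) {m : ℕ} {x : Fin k → ℕ} :
    x ∈ solutions a m ↔ ∑ i, a i * x i = m := by
  simp only [solutions, mem_filter, Fintype.mem_piFinset, mem_range, and_iff_right_iff_imp]
  intro hx i
  have h₁ : a i * x i ≤ ∑ j, a j * x j :=
    single_le_sum (f := fun j => a j * x j) (fun j _ => Nat.zero_le _) (mem_univ i)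
  have h₂ : x i ≤ a i * x i := Nat.le_mul_of_pos_left _ (ha i)
  omega

theorem repCount_eq_card_solutions (a : Fin k → ℕ) (m : ℕ) :
    repCount a m = (solutions a m).card := by
  refine card_nbij' (fun x i => (x i : ℕ)) (fun x i => ⟨min (x i) m, by omega⟩) ?_ ?_ ?_ ?_
  · intro x hx
    simp only [coe_filter, solutions, mem_univ, true_and, Set.mem_ofPred_eq,
      Fintype.mem_piFinset, mem_range] at hx ⊢
    exact ⟨fun i => (x i).isLt, hx⟩
  · intro x hx
    simp only [coe_filter, solutions, mem_univ, true_and, Set.mem_ofPred_eq,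
      Fintype.mem_piFinset, mem_range] at hx ⊢
    refine (sum_congr rfl fun i _ => ?_).trans hx.2
    have := hx.1 i
    congr 1
    omega
  · intro x _
    funext i
    exact Fin.ext (by have := (x i).isLt; simp only; omega)
  · intro x hx
    simp only [coe_filter, solutions, Set.mem_ofPred_eq, Fintype.mem_piFinset, mem_range] at hx
    funext i
    have := hx.1 i
    simp only
    omega

theorem repCount_comp_perm (a : Fin k → ℕ) (σ : Equiv.Perm (Fin k)) (m : ℕ) :
    repCount (a ∘ σ) m = repCount a m := by
  simp only [repCount_eq_card_solutions]
  refine card_nbij' (fun x => x ∘ σ.symm) (fun x => x ∘ σ) ?_ ?_ ?_ ?_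
  · intro x hx
    simp only [solutions, coe_filter, Fintype.mem_piFinset, mem_range, Set.mem_ofPred_eq] at hx ⊢
    refine ⟨fun i => hx.1 _, ?_⟩
    rw [← hx.2, ← Equiv.sum_comp σ]
    simp
  · intro x hx
    simp only [solutions, coe_filter, Fintype.mem_piFinset, mem_range, Set.mem_ofPred_eq] at hx ⊢
    exact ⟨fun i => hx.1 _, by rw [← hx.2]; exact Equiv.sum_comp σ (fun j => a j * x j)⟩
  · intro x _
    simp [Function.comp_def]
  · intro x _
    simp [Function.comp_def]

theorem repCount_cons {a₀ : ℕ} {a : Fin k → ℕ} (ha₀ : 0 < a₀) (ha : ∀ i, 0 < a i) (n : ℕ) :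
    repCount (Matrix.vecCons a₀ a) n =
      ∑ v ∈ range (n + 1), if a₀ * v ≤ n then repCount a (n - a₀ * v) else 0 := by
  have hcons : ∀ i, 0 < Matrix.vecCons a₀ a i := Fin.cases ha₀ ha
  simp only [repCount_eq_card_solutions]
  rw [card_eq_sum_card_fiberwise (f := fun x => x 0) (t := range (n + 1))]
  swap
  · intro x hx
    simp only [solutions, mem_coe, mem_filter, Fintype.mem_piFinset, mem_range] at hx
    exact mem_range.2 (hx.1 0)
  refine sum_congr rfl fun v _ => ?_
  split_ifs with hv
  · refine card_nbij' Fin.tail (fun y => Matrix.vecCons v y) ?_ ?_ ?_ ?_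
    · intro x hx
      simp only [mem_coe, mem_filter, mem_solutions hcons, mem_solutions ha] at hx ⊢
      rw [Fin.sum_univ_succ, hx.2] at hx
      simp only [Matrix.cons_val_zero, Matrix.cons_val_succ] at hx
      simp only [Fin.tail]
      omega
    · intro y hy
      simp only [mem_coe, mem_filter, mem_solutions hcons, mem_solutions ha] at hy ⊢
      simp only [Fin.sum_univ_succ, Matrix.cons_val_zero, Matrix.cons_val_succ, hy, and_true]
      omega
    · intro x hx
      simp only [mem_coe, mem_filter] at hx
      rw [← hx.2]
      exact Fin.cons_self_tail x
    · intro y _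
      exact Fin.tail_cons _ _
  · rw [card_eq_zero, filter_eq_empty_iff]
    rintro x hx rfl
    rw [mem_solutions hcons, Fin.sum_univ_succ] at hx
    simp only [Matrix.cons_val_zero] at hx
    omega

theorem repCount_nil (a : Fin 0 → ℕ) (m : ℕ) : repCount a m = if m = 0 then 1 else 0 := by
  rw [repCount_eq_card_solutions]
  split_ifs with hm
  · subst hm
    rw [card_eq_one]
    exact ⟨Fin.elim0, by ext x; simp [solutions, funext_iff]⟩
  · rw [card_eq_zero, solutions, filter_eq_empty_iff]
    simp [eq_comm, hm]

theorem repCount_single {b : ℕ} (hb : 0 < b) (m : ℕ) :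
    repCount ![b] m = if b ∣ m then 1 else 0 := by
  rw [repCount_cons (a := ![]) hb (fun i => i.elim0)]
  have hterm : ∀ v, (if b * v ≤ m then repCount ![] (m - b * v) else 0) =
      if m = b * v then 1 else 0 := by
    intro v
    rw [repCount_nil]
    split_ifs <;> omega
  simp only [hterm]
  split_ifs with hdvd
  · obtain ⟨w, rfl⟩ := hdvd
    simp only [Nat.mul_left_cancel_iff hb, sum_ite_eq, mem_range]
    exact if_pos (by nlinarith)
  · exact sum_eq_zero fun v _ => if_neg fun h => hdvd ⟨v, h⟩

end Counting

theorem card_filter_mul_le {a : ℕ} (ha : 0 < a) (m : ℕ) :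
    ((range (m + 1)).filter fun y => a * y ≤ m).card = m / a + 1 := by
  convert card_range (m / a + 1) using 2
  ext y
  simp only [mem_filter, mem_range, Nat.lt_succ_iff, Nat.le_div_iff_mul_le ha, mul_comm y a,
    and_iff_right_iff_imp]
  intro h
  nlinarith

theorem repCount_mul_pair {b q : ℕ} (hb : 0 < b) (hq : 0 < q) (m : ℕ) :
    repCount ![b * q, b] m = if b ∣ m then m / b / q + 1 else 0 := by
  rw [repCount_cons (a := ![b]) (by positivity) (fun i => by fin_cases i; exact hb)]
  have hterm : ∀ y, (if b * q * y ≤ m then repCount ![b] (m - b * q * y) else 0) =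
      if b ∣ m then (if b * q * y ≤ m then 1 else 0) else 0 := fun y => by
    by_cases hy : b * q * y ≤ m
    · simp only [repCount_single hb, Nat.dvd_sub_iff_left hy ⟨q * y, by ring⟩, if_pos hy]
    · simp only [if_neg hy, ite_self]
  simp only [hterm]
  split_ifs
  · rw [sum_boole, card_filter_mul_le (by positivity), Nat.div_div_eq_div_mul, Nat.cast_id]
  · exact sum_const_zero

theorem genFrob_eq_of_forall_lt {k : ℕ} {a : Fin k → ℕ} {s n : ℕ} (hn : repCount a n ≤ s)
    (hlt : ∀ m, n < m → s < repCount a m) : genFrob a s = n := by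
  have hbound : ∀ m ∈ {m : ℤ | repCountZ a m ≤ s}, m ≤ n := by
    intro m hm
    by_contra! h
    have hm' : s < repCount a m.toNat := hlt _ (by omega)
    simp only [Set.mem_ofPred_eq, repCountZ, if_pos (show (0 : ℤ) ≤ m by omega)] at hm
    omega
  have hmem : (n : ℤ) ∈ {m : ℤ | repCountZ a m ≤ s} := by
    simpa [repCountZ] using hn
  exact le_antisymm (csSup_le ⟨n, hmem⟩ hbound) (le_csSup ⟨n, hbound⟩ hmem)

theorem exists_lt_mul_modEq {b c : ℕ} (hb : 0 < b) (hco : b.Coprime c) (n : ℕ) :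
    ∃ z < b, c * z ≡ n [MOD b] := by
  have : NeZero b := ⟨hb.ne'⟩
  refine ⟨((c : ZMod b)⁻¹ * n).val, ZMod.val_lt _, ?_⟩
  rw [← ZMod.natCast_eq_natCast_iff]
  push_cast
  rw [ZMod.natCast_zmod_val, ← mul_assoc, ZMod.coe_mul_inv_eq_one c hco.symm, one_mul]

theorem le_of_modEq_of_lt_add {b x n : ℕ} (hmod : x ≡ n [MOD b]) (hlt : x < n + b) : x ≤ n := by
  by_contra! h
  have := Nat.le_of_dvd (by omega) ((Nat.modEq_iff_dvd' h.le).1 hmod.symm)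
  omega

theorem mul_add_mul_modEq (b c z j : ℕ) : c * (z + b * j) ≡ c * z [MOD b] := by
  rw [mul_add, mul_left_comm]
  exact Nat.add_mul_mod_self_left _ _ _

/-- The `z` with `b ∣ n - c * z` are exactly the `z₀ + b * j`. -/
theorem sum_ite_dvd_eq_sum_residue {b c n z₀ : ℕ} (hco : b.Coprime c) (hc : 0 < c)
    (hz₀ : z₀ < b) (hmod : c * z₀ ≡ n [MOD b]) (f : ℕ → ℕ) :
    ∑ z ∈ range (n + 1), (if c * z ≤ n ∧ b ∣ n - c * z then f z else 0) =
      ∑ j ∈ range (n + 1), if c * (z₀ + b * j) ≤ n then f (z₀ + b * j) else 0 := by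
  have hb : 0 < b := by omega
  have hclass : ∀ z, c * z ≤ n → b ∣ n - c * z → z₀ + b * (z / b) = z := by
    intro z hz hdvd
    have h₁ : c * z ≡ c * z₀ [MOD b] := ((Nat.modEq_iff_dvd' hz).2 hdvd).trans hmod.symm
    have h₂ : z % b = z₀ := by
      rw [Nat.ModEq.cancel_left_of_coprime hco h₁, Nat.mod_eq_of_lt hz₀]
    rw [← h₂, Nat.mod_add_div]
  rw [← sum_filter, ← sum_filter]
  refine sum_nbij' (fun z => z / b) (fun j => z₀ + b * j) ?_ ?_ ?_ ?_ ?_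
  · intro z hz
    simp only [mem_filter, mem_range] at hz ⊢
    rw [hclass z hz.2.1 hz.2.2]
    exact ⟨by have := Nat.div_le_self z b; omega, hz.2.1⟩
  · intro j hj
    simp only [mem_filter, mem_range] at hj ⊢
    have h₁ : z₀ + b * j ≤ c * (z₀ + b * j) := Nat.le_mul_of_pos_left _ hc
    exact ⟨by omega, hj.2, (Nat.modEq_iff_dvd' hj.2).1 ((mul_add_mul_modEq b c z₀ j).trans hmod)⟩
  · intro z hz
    simp only [mem_filter] at hz
    exact hclass z hz.2.1 hz.2.2
  · intro j _
    rw [Nat.add_mul_div_left _ _ hb, Nat.div_eq_of_lt hz₀, zero_add]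
  · intro z hz
    simp only [mem_filter] at hz
    rw [hclass z hz.2.1 hz.2.2]

theorem repCount_pair {b c n w₀ : ℕ} (hb : 0 < b) (hc : 0 < c) (hco : b.Coprime c)
    (hw₀ : w₀ < c) (hmod : b * w₀ ≡ n [MOD c]) :
    repCount ![b, c] n = ((range (n + 1)).filter fun j => b * (w₀ + c * j) ≤ n).card := by
  rw [repCount_cons (a := ![c]) hb (fun i => by fin_cases i; exact hc)]
  simp only [repCount_single hc, ← ite_and]
  rw [sum_ite_dvd_eq_sum_residue hco.symm hb hw₀ hmod (fun _ => 1), sum_boole, Nat.cast_id]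

theorem repCount_pair_frobenius_le {b c : ℕ} (hb : 2 ≤ b) (hc : 2 ≤ c) (hco : b.Coprime c)
    (X : ℕ) : repCount ![b, c] ((X + 1) * b * c - b - c) ≤ X := by
  set n₀ := (X + 1) * b * c - b - c
  have hbc : b + c ≤ b * c := Nat.add_le_mul hb hc
  have hn₀ : n₀ + b + c = b * c * (X + 1) := by
    have h₁ : (X + 1) * b * c = b * c * X + b * c := by ring
    have h₂ : b * c * (X + 1) = b * c * X + b * c := by ring
    omega
  have hmod : b * (c - 1) ≡ n₀ [MOD c] := by
    refine Nat.ModEq.add_right_cancel' b ?_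
    have h₁ : b * (c - 1) + b = c * b := by
      rw [← Nat.mul_succ, Nat.succ_eq_add_one, Nat.sub_add_cancel (by omega), mul_comm]
    have h₂ : n₀ + b = c * (b * (X + 1) - 1) := by
      rw [Nat.mul_sub, mul_one, ← mul_assoc, mul_comm c b]
      omega
    rw [h₁, h₂]
    exact (Nat.mul_mod_right c b).trans (Nat.mul_mod_right c _).symm
  rw [repCount_pair (by omega) (by omega) hco (by omega) hmod]
  refine (card_le_card fun j hj => ?_).trans (card_range X).le
  simp only [mem_filter, mem_range] at hj ⊢
  have h₁ : b * (c - 1 + c * j) + b = b * c * (j + 1) := by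
    rw [mul_add, add_right_comm, ← Nat.mul_succ, Nat.succ_eq_add_one, Nat.sub_add_cancel (by omega)]
    ring
  have h₂ : b * c * (j + 1) < b * c * (X + 1) := by omega
  have := Nat.lt_of_mul_lt_mul_left h₂
  omega

theorem repCount_pair_gt_of_frobenius_lt {b c : ℕ} (hb : 2 ≤ b) (hc : 2 ≤ c) (hco : b.Coprime c)
    {X n : ℕ} (hn : (X + 1) * b * c - b - c < n) : X < repCount ![b, c] n := by
  obtain ⟨w₀, hw₀, hmod⟩ := exists_lt_mul_modEq (by omega : 0 < c) hco.symm n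
  rw [repCount_pair (by omega) (by omega) hco hw₀ hmod]
  have hbc : b + c ≤ b * c := Nat.add_le_mul hb hc
  suffices range (X + 1) ⊆ (range (n + 1)).filter fun j => b * (w₀ + c * j) ≤ n by
    simpa using card_le_card this
  intro j hj
  simp only [mem_range] at hj
  have hle : b * (w₀ + c * j) ≤ n := by
    refine le_of_modEq_of_lt_add ((mul_add_mul_modEq c b w₀ j).trans hmod) ?_
    have h₁ : b * (w₀ + c * j) ≤ b * (c - 1 + c * X) :=
      Nat.mul_le_mul_left b (by have := Nat.mul_le_mul_left c (Nat.lt_succ_iff.1 hj); omega)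
    have h₂ : b * (c - 1 + c * X) + b = (X + 1) * b * c := by
      rw [mul_add, add_right_comm, ← Nat.mul_succ, Nat.succ_eq_add_one,
        Nat.sub_add_cancel (by omega)]
      ring
    have : b * c ≤ (X + 1) * b * c := by nlinarith
    omega
  have : j ≤ b * (w₀ + c * j) := by nlinarith
  simp only [mem_filter, mem_range]
  omega

theorem genFrob_pair_s16 {b c : ℕ} (hb : 2 ≤ b) (hc : 2 ≤ c) (hco : b.Coprime c) (X : ℕ) :
    genFrob ![b, c] X = (X + 1) * b * c - b - c := by
  have hbc : b + c ≤ (X + 1) * b * c := by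
    have : (X + 1) * b * c = b * c * X + b * c := by ring
    have := Nat.add_le_mul hb hc
    omega
  rw [genFrob_eq_of_forall_lt (repCount_pair_frobenius_le hb hc hco X)
    fun _ => repCount_pair_gt_of_frobenius_lt hb hc hco]
  push_cast [Nat.sub_sub, Nat.cast_sub hbc]
  ring

/-- The number of pairs `(j, y)` with `c * j + q * y ≤ M`, that is `d(M; c, q, 1)`. -/
def latticeCount (c q M : ℕ) : ℕ :=
  ∑ j ∈ range (M + 1), if c * j ≤ M then (M - c * j) / q + 1 else 0

theorem sum_range_eq_of_eq_zero {f : ℕ → ℕ} {m n : ℕ} (h : m ≤ n) (hf : ∀ j, m ≤ j → f j = 0) :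
    ∑ j ∈ range n, f j = ∑ j ∈ range m, f j :=
  (sum_subset (range_subset_range.2 h) fun j _ hj => hf j (by simpa using hj)).symm

theorem latticeCount_mono (c q : ℕ) {M M' : ℕ} (h : M ≤ M') :
    latticeCount c q M ≤ latticeCount c q M' := by
  refine (sum_le_sum fun j _ => ?_).trans (sum_le_sum_of_subset (range_subset_range.2
    (Nat.succ_le_succ h)))
  split_ifs with h₁ h₂
  · exact Nat.succ_le_succ (Nat.div_le_div_right (by omega))
  · omega
  · exact Nat.zero_le _
  · exact le_rfl

theorem repCount_triple {b q c n z₀ : ℕ} (hb : 0 < b) (hq : 0 < q) (hc : 0 < c)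
    (hco : b.Coprime c) (hz₀ : z₀ < b) (hmod : c * z₀ ≡ n [MOD b]) (hle : c * z₀ ≤ n) :
    repCount ![b * q, b, c] n = latticeCount c q ((n - c * z₀) / b) := by
  have hperm : ![b * q, b, c] ∘ ⇑(finRotate 3).symm = ![c, b * q, b] := by
    funext i; fin_cases i <;> rfl
  rw [← repCount_comp_perm _ (finRotate 3).symm, hperm,
    repCount_cons (a := ![b * q, b]) hc (fun i => by fin_cases i <;> simp [hb, hq])]
  simp only [repCount_mul_pair hb hq, ← ite_and]
  rw [sum_ite_dvd_eq_sum_residue hco hc hz₀ hmod fun z => (n - c * z) / b / q + 1]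
  obtain ⟨M, hM⟩ := (Nat.modEq_iff_dvd' hle).1 hmod
  have hMn : M ≤ n := by have := Nat.le_mul_of_pos_left M hb; omega
  rw [hM, Nat.mul_div_cancel_left _ hb, latticeCount,
    ← sum_range_eq_of_eq_zero (m := M + 1) (n := n + 1) (by omega)
      fun j hj => if_neg (by nlinarith)]
  refine sum_congr rfl fun j _ => ?_
  have hsplit : c * (z₀ + b * j) = c * z₀ + b * (c * j) := by ring
  by_cases hj : c * j ≤ M
  · have : n - c * (z₀ + b * j) = b * (M - c * j) := by
      rw [Nat.mul_sub, hsplit]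
      have := Nat.mul_le_mul_left b hj
      omega
    rw [if_pos (by have := Nat.mul_le_mul_left b hj; omega), if_pos hj, this,
      Nat.mul_div_cancel_left _ hb]
  · rw [if_neg (by have := Nat.mul_lt_mul_of_pos_left (not_le.1 hj) hb; omega), if_neg hj]

theorem genFrob_triple {b q c M s : ℕ} (hb : 0 < b) (hq : 0 < q) (hc : 0 < c)
    (hco : b.Coprime c) (hM : latticeCount c q M ≤ s) (hM₁ : s < latticeCount c q (M + 1)) :
    genFrob ![b * q, b, c] s = b * M + c * (b - 1) := by
  have hN : c * (b - 1) ≡ b * M + c * (b - 1) [MOD b] := by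
    rw [add_comm]
    exact (Nat.add_mul_mod_self_left _ _ _).symm
  suffices genFrob ![b * q, b, c] s = ((b * M + c * (b - 1) : ℕ) : ℤ) by
    rw [this]; push_cast [Nat.cast_sub hb]; ring
  refine genFrob_eq_of_forall_lt ?_ fun n hn => ?_
  · rw [repCount_triple hb hq hc hco (by omega) hN (by omega), Nat.add_sub_cancel,
      Nat.mul_div_cancel_left _ hb]
    exact hM
  · obtain ⟨z₀, hz₀, hmod⟩ := exists_lt_mul_modEq hb hco n
    have hcz₀ : c * z₀ ≤ c * (b - 1) := Nat.mul_le_mul_left c (by omega)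
    rw [repCount_triple hb hq hc hco hz₀ hmod (by omega)]
    refine hM₁.trans_le (latticeCount_mono c q ?_)
    obtain ⟨t, ht⟩ := (Nat.modEq_iff_dvd' (by omega : c * z₀ ≤ n)).1 hmod
    rw [ht, Nat.mul_div_cancel_left _ hb]
    by_contra! h
    have := Nat.mul_le_mul_left b (Nat.lt_succ_iff.1 h)
    omega

theorem Nat.div_eq_of_mul_add_eq {q a ρ n : ℕ} (h : q * a + ρ = n) (hρ : ρ < q) : n / q = a := by
  rw [← h, Nat.mul_add_div (by omega), Nat.div_eq_of_lt hρ, add_zero]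

section LatticeTerms

variable {q r X Y e M : ℕ}

theorem latticeTerm_of_lt (hr : 0 < r) (he : e ≤ 1) (hM : M + 1 = X * (2 * q + r) + Y * q + e)
    (hX : r * X < q) {j : ℕ} (hjX : j < X) :
    (if (2 * q + r) * j ≤ M then (M - (2 * q + r) * j) / q + 1 else 0) =
      2 * X + Y - 2 * j + if j < X + e then 1 else 0 := by
  obtain ⟨d, rfl⟩ := Nat.exists_eq_add_of_lt hjX
  have hM' : M + 1 = 2 * (q * j) + 2 * (q * (d + 1)) + r * j + r * (d + 1) + q * Y + e := by
    rw [hM]; ring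
  have hcj : (2 * q + r) * j = 2 * (q * j) + r * j := by ring
  have hqa : q * (2 * (d + 1) + Y) = 2 * (q * (d + 1)) + q * Y := by ring
  have hX' : r * (j + d + 1) = r * j + r * (d + 1) := by ring
  have hpos : 0 < r * (d + 1) := Nat.mul_pos hr d.succ_pos
  rw [if_pos (by omega), if_pos (by omega), Nat.div_eq_of_mul_add_eq
    (show q * (2 * (d + 1) + Y) + (r * (d + 1) + e - 1) = M - (2 * q + r) * j by omega)
    (by omega)]
  omega

theorem latticeTerm_self (hq : 0 < q) (he : e ≤ 1) (hM : M + 1 = X * (2 * q + r) + Y * q + e) :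
    (if (2 * q + r) * X ≤ M then (M - (2 * q + r) * X) / q + 1 else 0) =
      2 * X + Y - 2 * X + if X < X + e then 1 else 0 := by
  have hM' : M + 1 = (2 * q + r) * X + q * Y + e := by rw [hM]; ring
  interval_cases e
  · rcases Nat.eq_zero_or_pos Y with rfl | hY
    · rw [if_neg (by omega), if_neg (by omega)]
      omega
    · have hqY : q * (Y - 1) + q = q * Y := by
        rw [← Nat.mul_succ, Nat.succ_eq_add_one, Nat.sub_add_cancel hY]
      rw [if_pos (by omega), if_neg (by omega), Nat.div_eq_of_mul_add_eq
        (show q * (Y - 1) + (q - 1) = M - (2 * q + r) * X by omega) (by omega)]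
      omega
  · rw [if_pos (by omega), if_pos (by omega), Nat.div_eq_of_mul_add_eq
      (show q * Y + 0 = M - (2 * q + r) * X by omega) hq]
    omega

theorem latticeTerm_of_gt (hr : 0 < r) (he : e ≤ 1) (hM : M + 1 = X * (2 * q + r) + Y * q + e)
    {j : ℕ} (hj : 2 * j < 2 * X + Y → r * j < q) (hXj : X < j) :
    (if (2 * q + r) * j ≤ M then (M - (2 * q + r) * j) / q + 1 else 0) =
      2 * X + Y - 2 * j + if j < X + e then 1 else 0 := by
  obtain ⟨t, rfl⟩ := Nat.exists_eq_add_of_lt hXj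
  have hcj : (2 * q + r) * (X + t + 1) =
      2 * (q * X) + 2 * (q * (t + 1)) + r * X + r * (t + 1) := by ring
  have hM' : M + 1 = 2 * (q * X) + r * X + q * Y + e := by rw [hM]; ring
  have hpos : 0 < r * (t + 1) := Nat.mul_pos hr t.succ_pos
  rw [if_neg (by omega : ¬ X + t + 1 < X + e), add_zero]
  by_cases hjN : 2 * (X + t + 1) < 2 * X + Y
  · obtain ⟨a, ha⟩ := Nat.exists_eq_add_of_lt hjN
    have hrj : r * (t + 1) ≤ r * (X + t + 1) := Nat.mul_le_mul_left r (by omega)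
    have := hj hjN
    have hqY : q * Y = 2 * (q * (t + 1)) + q * a + q := by
      rw [show Y = 2 * (t + 1) + a + 1 by omega]; ring
    rw [if_pos (by omega), Nat.div_eq_of_mul_add_eq
      (show q * a + (q + e - r * (t + 1) - 1) = M - (2 * q + r) * (X + t + 1) by omega)
      (by omega)]
    omega
  · have hqY : q * Y ≤ 2 * (q * (t + 1)) := by
      rw [← mul_assoc, mul_comm 2 q, mul_assoc]
      exact Nat.mul_le_mul_left q (by omega)
    rw [if_neg (by omega)]
    omega

theorem latticeCount_eq (hq : 0 < q) (hr : 0 < r) (he : e ≤ 1)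
    (hM : M + 1 = X * (2 * q + r) + Y * q + e) (hX : r * X < q)
    (hj : ∀ j, 2 * j < 2 * X + Y → r * j < q) :
    latticeCount (2 * q + r) q M = ∑ j ∈ range (2 * X + Y), (2 * X + Y - 2 * j) + (X + e) := by
  have hterm : ∀ j, (if (2 * q + r) * j ≤ M then (M - (2 * q + r) * j) / q + 1 else 0) =
      2 * X + Y - 2 * j + if j < X + e then 1 else 0 := fun j => by
    rcases lt_trichotomy j X with hjX | rfl | hXj
    · exact latticeTerm_of_lt hr he hM hX hjX
    · exact latticeTerm_self hq he hM
    · exact latticeTerm_of_gt hr he hM (hj j) hXj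
  have hXc : X * 3 ≤ X * (2 * q + r) := Nat.mul_le_mul_left X (by omega)
  have hYq : Y ≤ Y * q := Nat.le_mul_of_pos_right Y hq
  rw [latticeCount, sum_congr rfl fun j _ => hterm j, sum_add_distrib,
    sum_range_eq_of_eq_zero (m := 2 * X + Y) (by omega) fun j hj => by omega,
    sum_range_eq_of_eq_zero (m := X + e) (by omega) fun j hj => if_neg (by omega),
    sum_congr rfl fun j hj => if_pos (mem_range.1 hj)]
  simp

end LatticeTerms

theorem sum_range_sub_two_mul_add_two (N : ℕ) :
    ∑ j ∈ range (N + 2), (N + 2 - 2 * j) = ∑ j ∈ range N, (N - 2 * j) + (N + 2) := by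
  rw [sum_range_succ', sum_range_succ]
  simp only [show ∀ j, N + 2 - 2 * (j + 1) = N - 2 * j from fun j => by omega]
  omega

theorem sum_range_two_mul_sub_two_mul (k : ℕ) :
    ∑ j ∈ range (2 * k), (2 * k - 2 * j) = k * (k + 1) := by
  induction k with
  | zero => simp
  | succ k ih => rw [show 2 * (k + 1) = 2 * k + 2 by ring, sum_range_sub_two_mul_add_two, ih]; ring

theorem sum_range_two_mul_add_one_sub_two_mul (k : ℕ) :
    ∑ j ∈ range (2 * k + 1), (2 * k + 1 - 2 * j) = (k + 1) * (k + 1) := by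
  induction k with
  | zero => simp
  | succ k ih =>
    rw [show 2 * (k + 1) + 1 = 2 * k + 1 + 2 by ring, sum_range_sub_two_mul_add_two, ih]; ring

theorem genFrob_mul_triple {b q r X Y K : ℕ} (hb : 2 ≤ b) (hq : 0 < q) (hr : 0 < r)
    (hco : b.Coprime (2 * q + r)) (hXY : 0 < X + Y) (hK : K * r < q) (hX : X ≤ K)
    (hN : 2 * X + Y ≤ 2 * K + 2) :
    genFrob ![b * q, b, 2 * q + r] (∑ j ∈ range (2 * X + Y), (2 * X + Y - 2 * j) + X) =
      genFrob ![b, 2 * q + r] X + (Y * (b * q) : ℕ) := by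
  have hrX : r * X < q := by nlinarith
  have hrj : ∀ j, 2 * j < 2 * X + Y → r * j < q := fun j hj => by
    have : r * j ≤ r * K := Nat.mul_le_mul_left r (by omega)
    nlinarith
  have hpos : 0 < X * (2 * q + r) + Y * q := by
    rcases Nat.eq_zero_or_pos X with rfl | hX0
    · have : 0 < Y := by omega
      positivity
    · positivity
  obtain ⟨M, hM⟩ : ∃ M, M + 1 = X * (2 * q + r) + Y * q := ⟨_, Nat.sub_add_cancel hpos⟩
  have hL₀ := latticeCount_eq hq hr (e := 0) (by omega) hM hrX hrj
  have hL₁ := latticeCount_eq hq hr (e := 1) le_rfl (by omega : M + 1 + 1 = _) hrX hrj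
  rw [add_zero] at hL₀
  rw [genFrob_triple (by omega) hq (by omega) hco hL₀.le (by omega), genFrob_pair_s16 hb (by omega) hco]
  have hMz : (M : ℤ) = X * (2 * q + r) + Y * q - 1 := by
    rw [eq_sub_iff_add_eq]; exact_mod_cast hM
  push_cast [hMz]
  ring

theorem sqrt_mul_succ_add_succ {k i : ℕ} (hi : i ≤ 2 * k + 1) :
    Nat.sqrt (k * (k + 1) + i + 1) = if i < k then k else k + 1 := by
  split_ifs with hik
  · rw [show k * (k + 1) + i + 1 = k * k + (k + i + 1) by ring]
    exact Nat.sqrt_add_eq k (by omega)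
  · rw [show k * (k + 1) + i + 1 = (k + 1) * (k + 1) + (i - k) by
      rw [Nat.add_mul, Nat.mul_add]; omega]
    exact Nat.sqrt_add_eq (k + 1) (by omega)

theorem xEvenN_yEvenN_spec {k i : ℕ} (hi : i ≤ 2 * k + 1) (hs : 0 < k * (k + 1) + i) :
    let X := xEvenN k i
    let Y := yEvenN k i
    let K := Nat.sqrt (k * (k + 1) + i + 1) - 1
    k * (k + 1) + i = ∑ j ∈ range (2 * X + Y), (2 * X + Y - 2 * j) + X ∧
      0 < X + Y ∧ X ≤ K ∧ 2 * X + Y ≤ 2 * K + 2 := by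
  have hki : 0 < k + i := by
    by_contra h
    obtain ⟨rfl, rfl⟩ : k = 0 ∧ i = 0 := by omega
    simp at hs
  simp only [xEvenN, yEvenN, sqrt_mul_succ_add_succ hi]
  split_ifs with hik hik'
  · rw [show 2 * i + 2 * (k - i) = 2 * k by omega, sum_range_two_mul_sub_two_mul]
    refine ⟨rfl, ?_, ?_, ?_⟩ <;> omega
  · rw [show 2 * i + 2 * (k - i) = 2 * k by omega, sum_range_two_mul_sub_two_mul]
    refine ⟨rfl, ?_, ?_, ?_⟩ <;> omega
  · omega
  · rw [show 2 * (i - k - 1) + (4 * k + 3 - 2 * i) = 2 * k + 1 by omega,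
      sum_range_two_mul_add_one_sub_two_mul]
    refine ⟨by ring_nf; omega, ?_, ?_, ?_⟩ <;> omega

theorem exists_eq_two_mul_add_of_ratio {b q c K : ℕ}
    (hlow : (2 : ℚ) < ((b * c : ℕ) : ℚ) / ((b * q : ℕ) : ℚ))
    (hhigh : ((b * c : ℕ) : ℚ) / ((b * q : ℕ) : ℚ) < 2 + 1 / (K : ℚ)) :
    0 < q ∧ ∃ r, c = 2 * q + r ∧ 0 < r ∧ K * r < q := by
  have hb : 0 < b := Nat.pos_of_ne_zero fun h => by simp [h] at hlow; norm_num at hlow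
  have hq : 0 < q := Nat.pos_of_ne_zero fun h => by simp [h] at hlow; norm_num at hlow
  have hq' : (0 : ℚ) < q := by exact_mod_cast hq
  push_cast at hlow hhigh
  rw [mul_div_mul_left _ _ (by exact_mod_cast hb.ne' : (b : ℚ) ≠ 0)] at hlow hhigh
  have h2q : 2 * q < c := by exact_mod_cast (lt_div_iff₀ hq').1 hlow
  refine ⟨hq, c - 2 * q, by omega, by omega, ?_⟩
  rcases Nat.eq_zero_or_pos K with rfl | hK
  · simpa using hq
  have hK' : (0 : ℚ) < K := by exact_mod_cast hK
  have hc : (c : ℚ) * K < 2 * q * K + q := by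
    have := mul_lt_mul_of_pos_right ((div_lt_iff₀ hq').1 hhigh) hK'
    field_simp at this
    linarith
  have : ((K * (c - 2 * q) : ℕ) : ℚ) < q := by
    push_cast [Nat.cast_sub h2q.le]
    linarith
  exact_mod_cast this

theorem stmt_16_general (s : ℕ) (hs : 2 ≤ s) (k i : ℕ) (hi : i ≤ 2 * k + 1)
    (hdecomp : s = k * (k + 1) + i)
    (A1 A2 A3 : ℕ) (h2 : 1 < A2)
    (hgcd : Nat.gcd A1 (Nat.gcd A2 A3) = 1) (hdvd : A2 ∣ A1)
    (hlow : (2 : ℚ) < ((A2 * A3 : ℕ) : ℚ) / (A1 : ℚ))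
    (hhigh : ((A2 * A3 : ℕ) : ℚ) / (A1 : ℚ) < 2 + 1 / ((Nat.sqrt (s + 1) - 1 : ℕ) : ℚ)) :
    genFrob ![A1, A2, A3] s =
      genFrob ![A2, A3] (xEvenN k i) + ((yEvenN k i * A1 : ℕ) : ℤ) := by
  obtain ⟨q, rfl⟩ := hdvd
  have hco : A2.Coprime A3 := (Nat.coprime_self _).1
    (Nat.Coprime.coprime_dvd_left (dvd_mul_of_dvd_left (Nat.gcd_dvd_left _ _) q) hgcd)
  obtain ⟨hq, r, rfl, hr, hK⟩ := exists_eq_two_mul_add_of_ratio hlow hhigh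
  subst hdecomp
  obtain ⟨hsum, hXY, hX, hN⟩ := xEvenN_yEvenN_spec hi (by omega)
  conv_lhs => rw [hsum]
  exact genFrob_mul_triple (by omega) hq hr hco hXY hK hX hN

/-- for `s ≥ 2` written as `s = k(k+1) + i`, `K_s^ev = ⌊√(s+1)⌋ - 1`, and
`A₁, A₂, A₃ > 1` with `gcd(A₁,A₂,A₃) = 1`, `A₂ ∣ A₁` and `2 < A₂A₃/A₁ < 2 + 1/K_s^ev`, one has
`g(A₁, A₂, A₃; s) = g(A₂, A₃; x_s^even) + y_s^even·A₁`. -/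
theorem stmt_16 (s : ℕ) (hs : 2 ≤ s) (k i : ℕ) (hi : i ≤ 2 * k + 1)
    (hdecomp : s = k * (k + 1) + i)
    (A1 A2 A3 : ℕ) (h1 : 1 < A1) (h2 : 1 < A2) (h3 : 1 < A3)
    (hgcd : Nat.gcd A1 (Nat.gcd A2 A3) = 1) (hdvd : A2 ∣ A1)
    (hlow : (2 : ℚ) < ((A2 * A3 : ℕ) : ℚ) / (A1 : ℚ))
    (hhigh : ((A2 * A3 : ℕ) : ℚ) / (A1 : ℚ) < 2 + 1 / ((Nat.sqrt (s + 1) - 1 : ℕ) : ℚ)) :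
    genFrob ![A1, A2, A3] s =
      genFrob ![A2, A3] (xEvenN k i) + ((yEvenN k i * A1 : ℕ) : ℤ) :=
  stmt_16_general s hs k i hi hdecomp A1 A2 A3 h2 hgcd hdvd hlow hhigh
end
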